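/- arXiv:1510.01710 — 2 statements merged into one kernel-verified Lean document; each statement's English description precedes it below -/
import Mathlib

section
/- Let n ≥ 3 be an integer and let μ be a real number with 4/n ≤ μ < 4/(n−1), and set s = (μn − 4)/(2μ). Then there exist positive real numbers q, r, q̃, r̃ such that: (i) 0 < 1/q < 1/2, 0 < 1/r < 1/2, 0 < 1/q̃ < 1/2, 0 < 1/r̃ < 1/2; (ii) 1/q + 1/q̃ < 1 and (n−2)/n < r/r̃ < n/(n−2); (iii) 1/q + n/r < n/2 and 1/q̃ + n/r̃ < n/2; (iv) 2/q + n/r = n/2 − s and 2/q + n/r + 2/q̃ + n/r̃ = n; (v) 1 − 1/q̃ = (μ+1)/q and 1 − 1/r̃ = (μ+1)/r; (vi) μ/q + μn/(2r) = 1 and μ/r < 1. -/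
/-!
With `x = 1/q` and `y = 1/r`, condition (v) determines `1/q̃ = 1 - (μ+1)x` and
`1/r̃ = 1 - (μ+1)y`, and condition (vi) puts `(x, y)` on the scaling line `μ(2x + ny) = 2`,
on which both identities of (iv) hold automatically. Along this line every remaining condition
is a strict inequality on `y` alone, and all of them follow once `y` lies in an open window
whose right end point is the endpoint case `q̃ = 2`. The constraint `4/n ≤ μ < 4/(n-1)` is what
keeps the window nonempty.
-/

section ScalingLine

variable {N μ x y : ℝ}

theorem exists_recip_r_window (hN : 3 ≤ N) (hNμ : 4 ≤ N * μ) (hμN : μ * (N - 1) < 4) :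
    ∃ y : ℝ, 2 - μ < N * μ * y ∧ N - 2 < ((N - 2) * (μ + 1) + N) * y ∧
      N * μ - 2 < N * μ * (μ + 1) * y ∧ N * μ * (μ + 1) * y < μ + 2 := by
  have hμ : 0 < μ := by nlinarith
  have hA : 0 < N * μ := by positivity
  have hD : 0 < N * μ * (μ + 1) := by positivity
  have hE : 0 < (N - 2) * (μ + 1) + N := by nlinarith
  have h₁ : (2 - μ) / (N * μ) < (μ + 2) / (N * μ * (μ + 1)) := by
    rw [div_lt_div_iff₀ hA hD]; nlinarith [mul_pos hA (mul_pos hμ hμ)]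
  have h₂ : (N - 2) / ((N - 2) * (μ + 1) + N) < (μ + 2) / (N * μ * (μ + 1)) := by
    rw [div_lt_div_iff₀ hE hD]
    -- the gap is `(N - 2)(μ + 1)(4 - μ(N - 1)) + (4 - μ(N - 1)) + 3μ`
    nlinarith [mul_pos (mul_pos (by linarith : (0:ℝ) < N - 2) (by linarith : (0:ℝ) < μ + 1))
      (by linarith : (0:ℝ) < 4 - μ * (N - 1))]
  have h₃ : (N * μ - 2) / (N * μ * (μ + 1)) < (μ + 2) / (N * μ * (μ + 1)) := by
    rw [div_lt_div_iff_of_pos_right hD]; nlinarith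
  obtain ⟨y, hlow, hup⟩ := exists_between (max_lt (max_lt h₁ h₂) h₃)
  simp only [max_lt_iff] at hlow
  obtain ⟨⟨hy₁, hy₂⟩, hy₃⟩ := hlow
  refine ⟨y, ?_, ?_, ?_, ?_⟩
  · rwa [div_lt_iff₀' hA] at hy₁
  · rwa [div_lt_iff₀' hE] at hy₂
  · rwa [div_lt_iff₀' hD] at hy₃
  · rwa [lt_div_iff₀' hD] at hup

theorem recip_q_mem_Ioo (hμ : 0 < μ) (hx : μ * (2 * x + N * y) = 2)
    (h₁ : 2 - μ < N * μ * y) (h₄ : N * μ * (μ + 1) * y < μ + 2) : x ∈ Set.Ioo 0 (1 / 2) := by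
  have : N * μ * y < 2 := by nlinarith
  constructor <;> nlinarith

theorem recip_r_mem_Ioo (hμ : 0 < μ) (hNμ : 4 ≤ N * μ)
    (h₃ : N * μ - 2 < N * μ * (μ + 1) * y) (h₄ : N * μ * (μ + 1) * y < μ + 2) :
    y ∈ Set.Ioo 0 (1 / 2) := by
  have hD : 0 < N * μ * (μ + 1) := by positivity
  constructor <;> nlinarith

theorem one_sub_mul_recip_q_mem_Ioo (hμ : 0 < μ) (hNμ : 4 ≤ N * μ)
    (hx : μ * (2 * x + N * y) = 2) (h₃ : N * μ - 2 < N * μ * (μ + 1) * y)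
    (h₄ : N * μ * (μ + 1) * y < μ + 2) : 1 - (μ + 1) * x ∈ Set.Ioo 0 (1 / 2) := by
  constructor <;> nlinarith

theorem one_sub_mul_recip_r_mem_Ioo (hμ2 : μ < 2) (hNμ : 4 ≤ N * μ)
    (h₃ : N * μ - 2 < N * μ * (μ + 1) * y) (h₄ : N * μ * (μ + 1) * y < μ + 2) :
    1 - (μ + 1) * y ∈ Set.Ioo 0 (1 / 2) := by
  constructor <;> nlinarith

theorem one_sub_mul_div_mem_Ioo (hN : 2 < N) (hμ : 0 < μ) (hμ2 : μ < 2) (hNμ : 4 ≤ N * μ)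
    (hy : 0 < y) (h₂ : N - 2 < ((N - 2) * (μ + 1) + N) * y)
    (h₄ : N * μ * (μ + 1) * y < μ + 2) :
    (1 - (μ + 1) * y) / y ∈ Set.Ioo ((N - 2) / N) (N / (N - 2)) := by
  have hD : 0 < N * μ * (μ + 1) := by positivity
  have hpos : 0 < N * (μ + 2) - 2 := by nlinarith
  have hpoly : (μ + 2) * (N * (μ + 2) - 2) ≤ N * (N * μ * (μ + 1)) := by
    -- the gap is `(Nμ - 4)(N(μ + 1) - μ) + 2(2 - μ)`
    nlinarith [mul_nonneg (sub_nonneg.2 hNμ) (by nlinarith : (0:ℝ) ≤ N * (μ + 1) - μ)]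
  have hlt : y * (N * (μ + 2) - 2) < N := by
    refine lt_of_mul_lt_mul_left ?_ hD.le
    nlinarith [mul_lt_mul_of_pos_right h₄ hpos]
  constructor
  · rw [div_lt_div_iff₀ (by linarith) hy]
    nlinarith
  · rw [div_lt_div_iff₀ hy (by linarith)]
    nlinarith

theorem add_mul_lt_half (hμ : 0 < μ) (hNμ : 4 ≤ N * μ) (hx : μ * (2 * x + N * y) = 2)
    (h₄ : N * μ * (μ + 1) * y < μ + 2) : x + N * y < N / 2 := by
  have : N * μ * y < 2 := by nlinarith
  nlinarith

theorem one_sub_mul_add_mul_lt_half (hμ : 0 < μ) (hx : μ * (2 * x + N * y) = 2)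
    (h₃ : N * μ - 2 < N * μ * (μ + 1) * y) :
    1 - (μ + 1) * x + N * (1 - (μ + 1) * y) < N / 2 := by
  nlinarith

end ScalingLine

/-- Existence of Lebesgue exponents compatible with the extended inhomogeneous
Strichartz estimates for the Schrödinger equation in dimension `n ≥ 3`. -/
theorem strichartz_exponents_high_dim (n : ℕ) (hn : 3 ≤ n) (μ : ℝ)
    (hμ1 : 4 / (n : ℝ) ≤ μ) (hμ2 : μ < 4 / ((n : ℝ) - 1))
    (s : ℝ) (hs : s = (μ * n - 4) / (2 * μ)) :
    ∃ q r qt rt : ℝ,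
      (0 < 1/q ∧ 1/q < 1/2) ∧ (0 < 1/r ∧ 1/r < 1/2) ∧
      (0 < 1/qt ∧ 1/qt < 1/2) ∧ (0 < 1/rt ∧ 1/rt < 1/2) ∧
      1/q + 1/qt < 1 ∧
      ((n : ℝ) - 2) / n < r / rt ∧ r / rt < (n : ℝ) / ((n : ℝ) - 2) ∧
      1/q + n/r < (n : ℝ)/2 ∧ 1/qt + n/rt < (n : ℝ)/2 ∧
      2/q + n/r = (n : ℝ)/2 - s ∧
      2/q + n/r + 2/qt + n/rt = (n : ℝ) ∧
      1 - 1/qt = (μ + 1)/q ∧ 1 - 1/rt = (μ + 1)/r ∧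
      μ/q + μ * n / (2 * r) = 1 ∧ μ/r < 1 := by
  have hN : (3 : ℝ) ≤ n := by exact_mod_cast hn
  have hNμ : 4 ≤ (n : ℝ) * μ := by rw [div_le_iff₀ (by linarith)] at hμ1; linarith
  have hμN : μ * ((n : ℝ) - 1) < 4 := (lt_div_iff₀ (by linarith)).mp hμ2
  have hμ : 0 < μ := by nlinarith
  have hμ_lt_two : μ < 2 := by nlinarith
  obtain ⟨y, h₁, h₂, h₃, h₄⟩ := exists_recip_r_window hN hNμ hμN
  obtain ⟨x, hx⟩ : ∃ x : ℝ, μ * (2 * x + n * y) = 2 :=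
    ⟨(2 - n * μ * y) / (2 * μ), by field_simp; ring⟩
  have hq := recip_q_mem_Ioo hμ hx h₁ h₄
  have hr := recip_r_mem_Ioo hμ hNμ h₃ h₄
  have hratio := one_sub_mul_div_mem_Ioo (by linarith) hμ hμ_lt_two hNμ hr.1 h₂ h₄
  refine ⟨x⁻¹, y⁻¹, (1 - (μ + 1) * x)⁻¹, (1 - (μ + 1) * y)⁻¹, ?_⟩
  simp only [div_inv_eq_mul, one_mul, ← div_eq_inv_mul]
  refine ⟨hq, hr, one_sub_mul_recip_q_mem_Ioo hμ hNμ hx h₃ h₄,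
    one_sub_mul_recip_r_mem_Ioo hμ_lt_two hNμ h₃ h₄, by nlinarith [hq.1], hratio.1, hratio.2,
    add_mul_lt_half hμ hNμ hx h₄, one_sub_mul_add_mul_lt_half hμ hx h₃, ?_,
    by linear_combination -hx, by ring, by ring, ?_, by nlinarith [hr.2]⟩
  · rw [hs]; field_simp; linear_combination 2 * hx
  · field_simp; linear_combination hx
end

section
/- Let n ∈ {1, 2} be an integer and let μ be a real number with 4/n ≤ μ, and additionally μ < 4 in the case n = 2; set s = (μn − 4)/(2μ). Then there exist positive real numbers q, r, q̃, r̃ such that: (i) 0 < 1/q < 1/2, 0 < 1/r < 1/2, 0 < 1/q̃ < 1/2, 0 < 1/r̃ < 1/2; (ii) 1/q + n/r < n/2 and 1/q̃ + n/r̃ < n/2; (iii) 2/q + n/r = n/2 − s and 2/q + n/r + 2/q̃ + n/r̃ = n; (iv) 1 − 1/q̃ = (μ+1)/q and 1 − 1/r̃ = (μ+1)/r; (v) μ/q + μn/(2r) = 1 and μ/r < 1. -/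
set_option maxHeartbeats 1600000 in
/-- Existence of Lebesgue exponents compatible with the extended inhomogeneous
Strichartz estimates for the Schrödinger equation in low dimensions `n = 1, 2`. -/
theorem strichartz_exponents_low_dim (n : ℕ) (hn : n = 1 ∨ n = 2) (μ : ℝ)
    (hμ1 : 4 / (n : ℝ) ≤ μ) (hμ2 : n = 2 → μ < 4)
    (s : ℝ) (hs : s = (μ * n - 4) / (2 * μ)) :
    ∃ q r qt rt : ℝ,
      (0 < 1/q ∧ 1/q < 1/2) ∧ (0 < 1/r ∧ 1/r < 1/2) ∧
      (0 < 1/qt ∧ 1/qt < 1/2) ∧ (0 < 1/rt ∧ 1/rt < 1/2) ∧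
      1/q + n/r < (n : ℝ)/2 ∧ 1/qt + n/rt < (n : ℝ)/2 ∧
      2/q + n/r = (n : ℝ)/2 - s ∧
      2/q + n/r + 2/qt + n/rt = (n : ℝ) ∧
      1 - 1/qt = (μ + 1)/q ∧ 1 - 1/rt = (μ + 1)/r ∧
      μ/q + μ * n / (2 * r) = 1 ∧ μ/r < 1 := by
  subst hs
  rcases hn with h | h <;> subst h
  · -- n = 1, μ ≥ 4
    have hμ : (4:ℝ) ≤ μ := by simpa using hμ1
    have h0 : (0:ℝ) < μ := by linarith
    have h1 : (0:ℝ) < μ + 1 := by linarith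
    have h3 : (0:ℝ) < μ + 3 := by linarith
    have hm1 : (0:ℝ) < μ - 1 := by linarith
    have hm3 : (0:ℝ) < μ - 3 := by linarith
    have h0' : μ ≠ 0 := ne_of_gt h0
    have h1' : μ + 1 ≠ 0 := ne_of_gt h1
    have h3' : μ + 3 ≠ 0 := ne_of_gt h3
    have hm1' : μ - 1 ≠ 0 := ne_of_gt hm1
    have hm3' : μ - 3 ≠ 0 := ne_of_gt hm3
    refine ⟨2*μ*(μ+1)/(μ+3), μ*(μ+1)/(μ-1), 2*μ/(μ-3), μ,
      ⟨by positivity, ?_⟩, ⟨by positivity, ?_⟩, ⟨by positivity, ?_⟩,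
      ⟨by positivity, ?_⟩, ?_, ?_, ?_, ?_, ?_, ?_, ?_, ?_⟩ <;> push_cast
    · rw [← sub_pos, show (1:ℝ)/2 - 1/(2*μ*(μ+1)/(μ+3)) = (μ^2-3)/(2*μ*(μ+1)) by
        field_simp; try ring]
      exact div_pos (by nlinarith) (by positivity)
    · rw [← sub_pos, show (1:ℝ)/2 - 1/(μ*(μ+1)/(μ-1)) = (μ^2-μ+2)/(2*μ*(μ+1)) by
        field_simp; try ring]
      exact div_pos (by nlinarith) (by positivity)
    · rw [← sub_pos, show (1:ℝ)/2 - 1/(2*μ/(μ-3)) = 3/(2*μ) by field_simp; try ring]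
      positivity
    · rw [← sub_pos, show (1:ℝ)/2 - 1/μ = (μ-2)/(2*μ) by field_simp; try ring]
      exact div_pos (by linarith) (by positivity)
    · rw [← sub_pos, show (1:ℝ)/2 - (1/(2*μ*(μ+1)/(μ+3)) + 1/(μ*(μ+1)/(μ-1)))
          = (μ^2-2*μ-1)/(2*μ*(μ+1)) by field_simp; try ring]
      exact div_pos (by nlinarith) (by positivity)
    · rw [← sub_pos, show (1:ℝ)/2 - (1/(2*μ/(μ-3)) + 1/μ) = 1/(2*μ) by
        field_simp; try ring]
      positivity
    · field_simp
      try ring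
    · field_simp
      try ring
    · field_simp
      try ring
    · field_simp
      try ring
    · field_simp
      try ring
    · rw [← sub_pos, show (1:ℝ) - μ/(μ*(μ+1)/(μ-1)) = 2/(μ+1) by field_simp; try ring]
      positivity
  · -- n = 2, 2 ≤ μ < 4
    have hμ : (2:ℝ) ≤ μ := by
      have h := hμ1
      norm_num at h
      linarith
    have hμ4 : μ < 4 := hμ2 rfl
    have h0 : (0:ℝ) < μ := by linarith
    have h1 : (0:ℝ) < μ + 1 := by linarith
    have h4 : (0:ℝ) < μ + 4 := by linarith
    have hm4 : (0:ℝ) < 3*μ - 4 := by linarith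
    have h4m : (0:ℝ) < 4 - μ := by linarith
    have h0' : μ ≠ 0 := ne_of_gt h0
    have h1' : μ + 1 ≠ 0 := ne_of_gt h1
    have h4' : μ + 4 ≠ 0 := ne_of_gt h4
    have hm4' : 3*μ - 4 ≠ 0 := ne_of_gt hm4
    refine ⟨4*μ*(μ+1)/(μ+4), 4*(μ+1)/3, 4*μ/(3*μ-4), 4,
      ⟨by positivity, ?_⟩, ⟨by positivity, ?_⟩, ⟨by positivity, ?_⟩,
      ⟨by positivity, by norm_num⟩, ?_, ?_, ?_, ?_, ?_, ?_, ?_, ?_⟩ <;> push_cast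
    · rw [← sub_pos, show (1:ℝ)/2 - 1/(4*μ*(μ+1)/(μ+4)) = (2*μ^2+μ-4)/(4*μ*(μ+1)) by
        field_simp; try ring]
      exact div_pos (by nlinarith) (by positivity)
    · rw [← sub_pos, show (1:ℝ)/2 - 1/(4*(μ+1)/3) = (2*μ-1)/(4*(μ+1)) by
        field_simp; try ring]
      exact div_pos (by linarith) (by positivity)
    · rw [← sub_pos, show (1:ℝ)/2 - 1/(4*μ/(3*μ-4)) = (4-μ)/(4*μ) by
        field_simp; try ring]
      exact div_pos h4m (by positivity)
    · rw [← sub_pos, show (2:ℝ)/2 - (1/(4*μ*(μ+1)/(μ+4)) + 2/(4*(μ+1)/3))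
          = (4*μ^2-3*μ-4)/(4*μ*(μ+1)) by field_simp; try ring]
      exact div_pos (by nlinarith) (by positivity)
    · rw [← sub_pos, show (2:ℝ)/2 - (1/(4*μ/(3*μ-4)) + 2/4) = (4-μ)/(4*μ) by
        field_simp; try ring]
      exact div_pos h4m (by positivity)
    · field_simp
      try ring
    · field_simp
      try ring
    · field_simp
      try ring
    · field_simp
      try ring
    · field_simp
      try ring
    · rw [← sub_pos, show (1:ℝ) - μ/(4*(μ+1)/3) = (μ+4)/(4*(μ+1)) by
        field_simp; try ring]
      positivity
end
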